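/- Let n ≥ 2 and let Γ be a finite connected graph of rank n (i.e. with free fundamental group of rank n) in which every vertex has valency at least 3. Then the number of geometric edges of Γ is at least n and at most 3n − 3; consequently any strictly decreasing chain of such graphs obtained by successively collapsing nonempty forests has at most 2n − 2 terms, so the spine K_n of outer space is a simplicial complex of dimension at most 2n − 3. -/

import Mathlib

set_option maxHeartbeats 800000

/-!
Formalization of statements from:
H. Glover, H.-W. Henn, "On the mod-p cohomology of Out(F_{2(p-1)})".
-/

noncomputable section
namespace OutFormal

/-! ### Finite graphs `(V, E, σ, t)` -/

/-- A finite graph: finite sets of vertices and (oriented) edges, a fixed-point-free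
involution `σ` pairing each oriented edge with its opposite, and a terminal vertex map
`t`. -/
structure FinGraph where
  V : Type
  E : Type
  [fintypeV : Fintype V]
  [fintypeE : Fintype E]
  edgeInv : E → E
  t : E → V
  edgeInv_invol : ∀ e, edgeInv (edgeInv e) = e
  edgeInv_ne : ∀ e, edgeInv e ≠ e

attribute [instance] FinGraph.fintypeV FinGraph.fintypeE

namespace FinGraph

variable (Γ : FinGraph)

/-- The source (initial vertex) of an oriented edge. -/
def src (e : Γ.E) : Γ.V := Γ.t (Γ.edgeInv e)

/-- `Walk Γ u w l`: the list of oriented edges `l` is an edge path from `u` to `w`. -/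
inductive Walk : Γ.V → Γ.V → List Γ.E → Prop
  | nil (v : Γ.V) : Walk v v []
  | cons {w : Γ.V} (e : Γ.E) {l : List Γ.E} (h : Walk (Γ.t e) w l) :
      Walk (Γ.src e) w (e :: l)

/-- Connectivity of a graph. -/
def Connected : Prop := ∀ u w : Γ.V, ∃ l, Γ.Walk u w l

/-- The number of geometric edges: the number of `σ`-orbits of oriented edges. -/
def edgeCount : ℕ := Fintype.card Γ.E / 2

/-- The number of vertices. -/
def vertexCount : ℕ := Fintype.card Γ.V

/-- The rank (first Betti number) of a connected graph:
`(number of geometric edges) − (number of vertices) + 1`. -/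
def rank : ℕ := Γ.edgeCount + 1 - Γ.vertexCount

/-- The valency of a vertex: the number of oriented edges ending at it. -/
def valency (v : Γ.V) : ℕ := by
  classical
  exact Fintype.card {e : Γ.E // Γ.t e = v}

/-- A reduced (backtracking-free) edge path. -/
def Reduced (l : List Γ.E) : Prop := l.Chain' (fun a b => b ≠ Γ.edgeInv a)

/-- A set of oriented edges, closed under `σ`, is a forest if it supports no nonempty
reduced closed walk. -/
def IsForest (F : Set Γ.E) : Prop :=
  (∀ e ∈ F, Γ.edgeInv e ∈ F) ∧
  ∀ v l, l ≠ [] → (∀ e ∈ l, e ∈ F) → Γ.Walk v v l → ¬ Γ.Reduced l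

/-- There is no separating (geometric) edge: any two vertices can be joined by an edge
path avoiding any given geometric edge. -/
def NoSepEdge : Prop :=
  ∀ (e₀ : Γ.E) (u w : Γ.V), ∃ l, Γ.Walk u w l ∧ e₀ ∉ l ∧ Γ.edgeInv e₀ ∉ l

/-- An admissible graph: connected, all valencies at least `3`, no separating edges. -/
def Admissible : Prop :=
  Γ.Connected ∧ (∀ v, 3 ≤ Γ.valency v) ∧ Γ.NoSepEdge

end FinGraph

/-- An isomorphism of graphs. -/
structure GIso (Γ₁ Γ₂ : FinGraph) where
  eV : Γ₁.V ≃ Γ₂.V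
  eE : Γ₁.E ≃ Γ₂.E
  map_edgeInv : ∀ e, eE (Γ₁.edgeInv e) = Γ₂.edgeInv (eE e)
  map_t : ∀ e, eV (Γ₁.t e) = Γ₂.t (eE e)

namespace FinGraph

variable (Γ : FinGraph)

/-- The graph obtained from `Γ` by collapsing each tree of the forest `F` (given with
its closure under `σ`) to a point: the vertices are identified along the edges of `F`,
and the edges of `F` are deleted. -/
def collapse (F : Set Γ.E) (hF : ∀ e ∈ F, Γ.edgeInv e ∈ F) : FinGraph where
  V := Quotient (Relation.EqvGen.setoid (fun v w => ∃ e ∈ F, Γ.src e = v ∧ Γ.t e = w))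
  E := {e : Γ.E // e ∉ F}
  fintypeV := @Quotient.fintype _ _ _ (Classical.decRel _)
  fintypeE := @Subtype.fintype _ _ (Classical.decPred _) _
  edgeInv := fun e => ⟨Γ.edgeInv e.1, fun h => e.2 (by
    have := hF _ h
    rwa [Γ.edgeInv_invol] at this)⟩
  t := fun e => Quotient.mk _ (Γ.t e.1)
  edgeInv_invol := fun e => Subtype.ext (Γ.edgeInv_invol e.1)
  edgeInv_ne := fun e h => Γ.edgeInv_ne e.1 (congrArg Subtype.val h)

end FinGraph


/-! ### The model `Z/p`-graphs: the rose, `Θ_{p-1}^{s,t}`, and `Θ_{p-1} ∨ Θ_{p-1}` -/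

/-- The rose with `p + m` petals, `p` of which will be cyclically permuted. -/
def roseModel (p m : ℕ) : FinGraph where
  V := Unit
  E := (Fin p ⊕ Fin m) × Bool
  edgeInv := fun e => (e.1, !e.2)
  t := fun _ => ()
  edgeInv_invol := fun e => by simp
  edgeInv_ne := fun e h => by
    have := congrArg Prod.snd h
    simp at this

/-- The rotation of the rose, cyclically permuting the `p` distinguished petals and
fixing the remaining `m` petals. -/
def roseRot (p m : ℕ) : GIso (roseModel p m) (roseModel p m) where
  eV := Equiv.refl _
  eE := Equiv.prodCongr ((finRotate p).sumCongr (Equiv.refl _)) (Equiv.refl _)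
  map_edgeInv := fun e => rfl
  map_t := fun e => rfl

/-- The graph `Θ_{p-1}^{s,t}`: two vertices `0, 1`, joined by `p` edges, with `s` loops
attached at the vertex `0` and `t` loops at the vertex `1`. -/
def thetaModel (p s t : ℕ) : FinGraph where
  V := Fin 2
  E := (Fin p × Bool) ⊕ ((Fin s ⊕ Fin t) × Bool)
  edgeInv := fun e => match e with
    | Sum.inl (j, b) => Sum.inl (j, !b)
    | Sum.inr (c, b) => Sum.inr (c, !b)
  t := fun e => match e with
    | Sum.inl (_, true) => 1
    | Sum.inl (_, false) => 0
    | Sum.inr (Sum.inl _, _) => 0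
    | Sum.inr (Sum.inr _, _) => 1
  edgeInv_invol := fun e => by rcases e with ⟨j, b⟩ | ⟨c, b⟩ <;> simp
  edgeInv_ne := fun e h => by
    rcases e with ⟨j, b⟩ | ⟨c, b⟩ <;>
      · simp only [Sum.inl.injEq, Sum.inr.injEq, Prod.mk.injEq] at h
        rcases h with ⟨-, h2⟩
        simp at h2

/-- The rotation of `Θ_{p-1}^{s,t}`, cyclically rotating the `p` edges of `Θ_{p-1}` and
fixing all attached loops. -/
def thetaRot (p s t : ℕ) : GIso (thetaModel p s t) (thetaModel p s t) where
  eV := Equiv.refl _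
  eE := Equiv.sumCongr (Equiv.prodCongr (finRotate p) (Equiv.refl _)) (Equiv.refl _)
  map_edgeInv := fun e => by rcases e with ⟨j, b⟩ | ⟨c, b⟩ <;> rfl
  map_t := fun e => by rcases e with ⟨j, b | b⟩ | ⟨c | c, b⟩ <;> rfl

/-- The wedge `Θ_{p-1} ∨ Θ_{p-1}`: vertices `0` (left), `1` (wedge point), `2` (right),
with `p` edges between `0, 1` and `p` edges between `1, 2`. -/
def wedgeModel (p : ℕ) : FinGraph where
  V := Fin 3
  E := (Fin p × Bool) ⊕ (Fin p × Bool)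
  edgeInv := fun e => match e with
    | Sum.inl (j, b) => Sum.inl (j, !b)
    | Sum.inr (j, b) => Sum.inr (j, !b)
  t := fun e => match e with
    | Sum.inl (_, true) => 0
    | Sum.inl (_, false) => 1
    | Sum.inr (_, true) => 2
    | Sum.inr (_, false) => 1
  edgeInv_invol := fun e => by rcases e with ⟨j, b⟩ | ⟨j, b⟩ <;> simp
  edgeInv_ne := fun e h => by
    rcases e with ⟨j, b⟩ | ⟨j, b⟩ <;>
      · simp only [Sum.inl.injEq, Sum.inr.injEq, Prod.mk.injEq] at h
        rcases h with ⟨-, h2⟩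
        simp at h2

/-- The diagonal rotation of `Θ_{p-1} ∨ Θ_{p-1}`, cyclically rotating the `p` edges of
each of the two copies of `Θ_{p-1}`. -/
def wedgeRot (p : ℕ) : GIso (wedgeModel p) (wedgeModel p) where
  eV := Equiv.refl _
  eE := Equiv.sumCongr (Equiv.prodCongr (finRotate p) (Equiv.refl _))
    (Equiv.prodCongr (finRotate p) (Equiv.refl _))
  map_edgeInv := fun e => by rcases e with ⟨j, b⟩ | ⟨j, b⟩ <;> rfl
  map_t := fun e => by rcases e with ⟨j, b | b⟩ | ⟨j, b | b⟩ <;> rfl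

/-!
The handshake lemma and the valency bound give `3 V ≤ 2 E`, while the rank gives
`E = V + n - 1` (here `V ≥ 1`, as the empty graph has rank `1`); together these pin `E`
between `n` and `3n - 3`. Collapsing a nonempty forest deletes edges, so along a chain of
collapses the edge count is strictly decreasing, hence injective into `[n, 3n - 3]`.
-/

lemma Fintype.card_le_of_injective_of_mem_Icc {ι : Type*} [Fintype ι] {a b : ℕ} {f : ι → ℕ}
    (hf : Function.Injective f) (hab : ∀ i, f i ∈ Finset.Icc a b) :
    Fintype.card ι ≤ b + 1 - a := by
  simpa using Fintype.card_le_of_injective (fun i => (⟨f i, hab i⟩ : Finset.Icc a b))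
    fun i j hij => hf (congrArg Subtype.val hij)

lemma two_dvd_card_of_involutive_of_ne {α : Type*} [Fintype α] {f : α → α}
    (hf : Function.Involutive f) (hne : ∀ a, f a ≠ a) : 2 ∣ Fintype.card α := by
  classical
  have hsupp : (hf.toPerm f).support = Finset.univ := by
    ext a
    simpa using hne a
  rw [← Finset.card_univ, ← hsupp]
  exact Equiv.Perm.two_dvd_card_support (Equiv.ext fun a => hf a)

namespace FinGraph

variable (Γ : FinGraph)

lemma card_E_eq_two_mul_edgeCount : Fintype.card Γ.E = 2 * Γ.edgeCount :=
  (Nat.mul_div_cancel' (two_dvd_card_of_involutive_of_ne Γ.edgeInv_invol Γ.edgeInv_ne)).symm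

lemma card_E_eq_sum_valency : Fintype.card Γ.E = ∑ v, Γ.valency v := by
  classical
  rw [← Fintype.card_congr (Equiv.sigmaFiberEquiv Γ.t), Fintype.card_sigma]
  rfl

lemma three_mul_vertexCount_le (hval : ∀ v, 3 ≤ Γ.valency v) :
    3 * Γ.vertexCount ≤ 2 * Γ.edgeCount := by
  rw [← card_E_eq_two_mul_edgeCount, card_E_eq_sum_valency, vertexCount, mul_comm,
    ← smul_eq_mul, ← Finset.card_univ, ← Finset.sum_const]
  exact Finset.sum_le_sum fun v _ => hval v

lemma edgeCount_eq_zero_of_isEmpty [IsEmpty Γ.V] : Γ.edgeCount = 0 := by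
  have : IsEmpty Γ.E := Function.isEmpty Γ.t
  simp [edgeCount]

theorem edgeCount_mem_Icc {n : ℕ} (hn : 2 ≤ n) (hval : ∀ v, 3 ≤ Γ.valency v)
    (hrank : Γ.rank = n) : Γ.edgeCount ∈ Finset.Icc n (3 * n - 3) := by
  have h3V := Γ.three_mul_vertexCount_le hval
  have hV : 0 < Γ.vertexCount := by
    by_contra! h
    have : IsEmpty Γ.V := Fintype.card_eq_zero_iff.mp (by rw [← vertexCount]; omega)
    simp [rank, Γ.edgeCount_eq_zero_of_isEmpty, vertexCount] at hrank
    omega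
  rw [rank] at hrank
  rw [Finset.mem_Icc]
  omega

lemma edgeCount_collapse_lt {F : Set Γ.E} (hF : ∀ e ∈ F, Γ.edgeInv e ∈ F)
    (hne : F.Nonempty) : (Γ.collapse F hF).edgeCount < Γ.edgeCount := by
  classical
  have hcard : Fintype.card F + Fintype.card (Γ.collapse F hF).E = Fintype.card Γ.E := by
    rw [← Fintype.card_sum]
    convert Fintype.card_congr (Equiv.sumCompl (· ∈ F)) using 3
    rfl
  have hFpos : 0 < Fintype.card F := Fintype.card_pos_iff.mpr hne.to_subtype
  have hE' := (Γ.collapse F hF).card_E_eq_two_mul_edgeCount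
  have hE := Γ.card_E_eq_two_mul_edgeCount
  omega

end FinGraph

lemma GIso.edgeCount_eq {Γ₁ Γ₂ : FinGraph} (φ : GIso Γ₁ Γ₂) : Γ₁.edgeCount = Γ₂.edgeCount := by
  rw [FinGraph.edgeCount, FinGraph.edgeCount, Fintype.card_congr φ.eE]

theorem statement19 (n : ℕ) (hn : 2 ≤ n) :
    -- edge bounds
    (∀ Γ : FinGraph, Γ.Connected → (∀ v, 3 ≤ Γ.valency v) → Γ.rank = n →
      n ≤ Γ.edgeCount ∧ Γ.edgeCount ≤ 3 * n - 3) ∧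
    -- chains of forest collapses have at most `2n - 2` terms
    (∀ (k : ℕ) (c : Fin (k + 1) → FinGraph),
      (∀ i, (c i).Connected ∧ (∀ v, 3 ≤ (c i).valency v) ∧ (c i).rank = n) →
      (∀ i : Fin k,
        ∃ (F : Set (c i.castSucc).E) (hfor : (c i.castSucc).IsForest F),
          F.Nonempty ∧
          Nonempty (GIso ((c i.castSucc).collapse F hfor.1) (c i.succ))) →
      k + 1 ≤ 2 * n - 2) := by
  refine ⟨fun Γ _ hval hrank => Finset.mem_Icc.mp (Γ.edgeCount_mem_Icc hn hval hrank), ?_⟩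
  intro k c hgood hcollapse
  have hanti : StrictAnti fun i => (c i).edgeCount := by
    refine Fin.strictAnti_iff_succ_lt.mpr fun i => ?_
    obtain ⟨F, hfor, hne, ⟨φ⟩⟩ := hcollapse i
    exact φ.edgeCount_eq ▸ (c i.castSucc).edgeCount_collapse_lt hfor.1 hne
  have hk := Fintype.card_le_of_injective_of_mem_Icc hanti.injective
    fun i => (c i).edgeCount_mem_Icc hn (hgood i).2.1 (hgood i).2.2
  rw [Fintype.card_fin] at hk
  omega

end OutFormal
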